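/- Let k ≥ 2 and let T be the tree in which at each level exactly one distinguished vertex has k children and all other vertices have exactly one child (so γ(n) = nk − (n−1)). Then the forward shift S on H^p(T) is bounded with ‖S‖ = k^{1/p}. -/

import Mathlib

open scoped BigOperators
open Classical

/-- An infinite, locally finite rooted tree, presented combinatorially via a
parent function and a level (distance-to-root) function.  Every level is a
finite nonempty set of vertices. -/
structure HTree where
  V : Type
  root : V
  parent : V → V
  level : V → ℕ
  level_root : level root = 0
  root_of_level_zero : ∀ v, level v = 0 → v = root
  level_parent : ∀ v, v ≠ root → level (parent v) + 1 = level v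
  finite_level : ∀ n : ℕ, {v : V | level v = n}.Finite
  nonempty_level : ∀ n : ℕ, {v : V | level v = n}.Nonempty

namespace HTree

variable (T : HTree)

/-- The finite set of vertices at level `n`. -/
noncomputable def levelFinset (n : ℕ) : Finset T.V := (T.finite_level n).toFinset

/-- `γ(n)`, the number of vertices at level `n`. -/
noncomputable def gamma (n : ℕ) : ℕ := (T.levelFinset n).card

/-- The set of `m`-children of a vertex `v`. -/
noncomputable def nChildrenFinset (m : ℕ) (v : T.V) : Finset T.V :=
  (T.levelFinset (T.level v + m)).filter (fun w => T.parent^[m] w = v)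

/-- `γ(m,v)`, the number of `m`-children of `v`. -/
noncomputable def numNChildren (m : ℕ) (v : T.V) : ℕ := (T.nChildrenFinset m v).card

/-- The set of children of a vertex. -/
noncomputable def childrenFinset (v : T.V) : Finset T.V := T.nChildrenFinset 1 v

/-- `γ(1,v)`, the number of children of `v`. -/
noncomputable def numChildren (v : T.V) : ℕ := T.numNChildren 1 v

/-- `K(m,r)`, the maximal number of `m`-children among vertices at level `r`. -/
noncomputable def K (m r : ℕ) : ℕ := (T.levelFinset r).sup (fun v => T.numNChildren m v)

/-- `M_p^p(n,f)`, the `p`-th power of the `p`-th mean of `|f|` over level `n`. -/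
noncomputable def Mpp (p : ℝ) (f : T.V → ℂ) (n : ℕ) : ℝ :=
  (1 / (T.gamma n : ℝ)) * ∑ v ∈ T.levelFinset n, ‖f v‖ ^ p

/-- `M_p(n,f)`, the `p`-th mean of `|f|` over level `n`. -/
noncomputable def Mp (p : ℝ) (f : T.V → ℂ) (n : ℕ) : ℝ := (T.Mpp p f n) ^ (1 / p)

/-- Membership in the Hardy space `H^p(T)`. -/
def MemHp (p : ℝ) (f : T.V → ℂ) : Prop := ∃ C : ℝ, ∀ n : ℕ, T.Mp p f n ≤ C

/-- Membership in the little Hardy space `H^p_0(T)`. -/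
def MemHp0 (p : ℝ) (f : T.V → ℂ) : Prop :=
  Filter.Tendsto (T.Mp p f) Filter.atTop (nhds 0)

/-- The `H^p` norm, `sup_n M_p(n,f)`. -/
noncomputable def Hnorm (p : ℝ) (f : T.V → ℂ) : ℝ := ⨆ n : ℕ, T.Mp p f n

/-- The forward shift `(Sf)(v) = f(parent v)`, `(Sf)(root) = 0`. -/
noncomputable def S (f : T.V → ℂ) : T.V → ℂ := fun v => if v = T.root then 0 else f (T.parent v)

/-- The backward shift `(Bf)(v) = Σ_{w child of v} f(w)`. -/
noncomputable def B (f : T.V → ℂ) : T.V → ℂ := fun v => ∑ w ∈ T.childrenFinset v, f w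

/-- An operator `A` is bounded on the subspace described by `Mem`, with the
`H^p` norm. -/
def BoundedOn (A : (T.V → ℂ) → (T.V → ℂ)) (Mem : (T.V → ℂ) → Prop) (p : ℝ) : Prop :=
  ∃ C : ℝ, 0 ≤ C ∧ ∀ f, Mem f → Mem (A f) ∧ T.Hnorm p (A f) ≤ C * T.Hnorm p f

/-- The operator norm of `A` on the subspace described by `Mem`. -/
noncomputable def opNorm (A : (T.V → ℂ) → (T.V → ℂ)) (Mem : (T.V → ℂ) → Prop) (p : ℝ) : ℝ :=
  sInf {C : ℝ | 0 ≤ C ∧ ∀ f, Mem f → Mem (A f) ∧ T.Hnorm p (A f) ≤ C * T.Hnorm p f}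

/-- Hypercyclicity of an operator `A` on the subspace described by `Mem`. -/
def Hypercyclic (A : (T.V → ℂ) → (T.V → ℂ)) (Mem : (T.V → ℂ) → Prop) (p : ℝ) : Prop :=
  ∃ f, Mem f ∧ ∀ g, Mem g → ∀ ε : ℝ, 0 < ε →
    ∃ N : ℕ, T.Hnorm p (fun v => A^[N] f v - g v) < ε

end HTree

/-!
A vertex `v` at level `n` contributes `‖f v‖^p` to `M_p^p(n, f)` and, through its
`γ(1,v) ≤ K(1,n)` children, `γ(1,v) ‖f v‖^p` to `M_p^p(n+1, Sf)`. Hence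
`M_p^p(n+1, Sf) ≤ K(1,n) γ(n)/γ(n+1) · M_p^p(n, f)`, and testing `S` on the indicator of a
vertex with `K(1,n)` children shows that `‖S‖^p` is exactly `sup_n K(1,n) γ(n)/γ(n+1)`.
For the given tree this ratio is `k (n(k-1)+1)/((n+1)(k-1)+1)`, which increases to `k`.
-/

open Filter Set Topology

theorem tendsto_mul_add_one_div_succ_mul_add_one {d : ℝ} (hd : 0 ≤ d) :
    Tendsto (fun n : ℕ => (n * d + 1) / ((n + 1) * d + 1)) atTop (𝓝 1) := by
  refine tendsto_of_tendsto_of_tendsto_of_le_of_le (tendsto_natCast_div_add_atTop (1 : ℝ))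
    tendsto_const_nhds (fun n => ?_) (fun n => ?_)
  · rw [div_le_div_iff₀ (by positivity) (by positivity)]
    nlinarith
  · exact div_le_one_of_le₀ (by nlinarith) (by positivity)

namespace HTree

variable {T : HTree}

theorem mem_levelFinset {v : T.V} {n : ℕ} : v ∈ T.levelFinset n ↔ T.level v = n := by
  simp [levelFinset]

theorem levelFinset_zero : T.levelFinset 0 = {T.root} := by
  ext v
  rw [mem_levelFinset, Finset.mem_singleton]
  exact ⟨T.root_of_level_zero v, fun h => h ▸ T.level_root⟩

theorem gamma_pos (n : ℕ) : 0 < T.gamma n := by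
  obtain ⟨v, hv⟩ := T.nonempty_level n
  exact Finset.card_pos.mpr ⟨v, mem_levelFinset.mpr hv⟩

theorem ne_root_of_level_eq_succ {w : T.V} {n : ℕ} (hw : T.level w = n + 1) : w ≠ T.root := by
  rintro rfl
  simp [T.level_root] at hw

theorem numChildren_le_K {v : T.V} {n : ℕ} (hv : T.level v = n) : T.numChildren v ≤ T.K 1 n :=
  Finset.le_sup (f := fun v => T.numNChildren 1 v) (mem_levelFinset.mpr hv)

theorem exists_numChildren_eq_K (n : ℕ) : ∃ v, T.level v = n ∧ T.numChildren v = T.K 1 n := by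
  obtain ⟨v, hv⟩ := T.nonempty_level n
  obtain ⟨w, hw, hsup⟩ := Finset.exists_mem_eq_sup (T.levelFinset n)
    ⟨v, mem_levelFinset.mpr hv⟩ (fun v => T.numNChildren 1 v)
  exact ⟨w, mem_levelFinset.mp hw, hsup.symm⟩

theorem sum_rpow_norm_S_succ (p : ℝ) (f : T.V → ℂ) (n : ℕ) :
    ∑ w ∈ T.levelFinset (n + 1), ‖T.S f w‖ ^ p
      = ∑ v ∈ T.levelFinset n, (T.numChildren v : ℝ) * ‖f v‖ ^ p := by
  have hparent : ∀ w ∈ T.levelFinset (n + 1), T.parent w ∈ T.levelFinset n := by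
    intro w hw
    rw [mem_levelFinset] at hw ⊢
    have := T.level_parent w (ne_root_of_level_eq_succ hw)
    omega
  rw [← Finset.sum_fiberwise_of_maps_to hparent]
  refine Finset.sum_congr rfl fun v hv => ?_
  have hchildren :
      (T.levelFinset (n + 1)).filter (fun w => T.parent w = v) = T.childrenFinset v := by
    simp [childrenFinset, nChildrenFinset, mem_levelFinset.mp hv]
  have hSf : ∀ w ∈ T.childrenFinset v, ‖T.S f w‖ ^ p = ‖f v‖ ^ p := by
    intro w hw
    rw [← hchildren, Finset.mem_filter, mem_levelFinset] at hw
    simp [S, ne_root_of_level_eq_succ hw.1, hw.2]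
  rw [hchildren, Finset.sum_congr rfl hSf, Finset.sum_const, nsmul_eq_mul]
  rfl

theorem Mpp_nonneg (p : ℝ) (f : T.V → ℂ) (n : ℕ) : 0 ≤ T.Mpp p f n :=
  mul_nonneg (by positivity) (Finset.sum_nonneg fun _ _ => by positivity)

theorem Mp_nonneg (p : ℝ) (f : T.V → ℂ) (n : ℕ) : 0 ≤ T.Mp p f n :=
  Real.rpow_nonneg (T.Mpp_nonneg p f n) _

theorem Hnorm_nonneg (p : ℝ) (f : T.V → ℂ) : 0 ≤ T.Hnorm p f :=
  Real.iSup_nonneg (T.Mp_nonneg p f)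

theorem bddAbove_range_Mp {p : ℝ} {f : T.V → ℂ} (hf : T.MemHp p f) :
    BddAbove (range (T.Mp p f)) := by
  obtain ⟨C, hC⟩ := hf
  exact ⟨C, forall_mem_range.mpr hC⟩

theorem Mp_le_Hnorm {p : ℝ} {f : T.V → ℂ} (hf : T.MemHp p f) (n : ℕ) : T.Mp p f n ≤ T.Hnorm p f :=
  le_ciSup (bddAbove_range_Mp hf) n

theorem Mp_S_zero {p : ℝ} (hp : 0 < p) (f : T.V → ℂ) : T.Mp p (T.S f) 0 = 0 := by
  simp [Mp, Mpp, levelFinset_zero, S, Real.zero_rpow hp.ne', Real.zero_rpow (inv_ne_zero hp.ne')]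

variable (T) in
noncomputable def shiftRatio (n : ℕ) : ℝ := T.K 1 n * T.gamma n / T.gamma (n + 1)

theorem shiftRatio_nonneg (n : ℕ) : 0 ≤ T.shiftRatio n := by
  unfold shiftRatio
  positivity

theorem Mpp_S_succ_le (p : ℝ) (f : T.V → ℂ) (n : ℕ) :
    T.Mpp p (T.S f) (n + 1) ≤ T.shiftRatio n * T.Mpp p f n := by
  have hγ : (0 : ℝ) < T.gamma n := by exact_mod_cast T.gamma_pos n
  have hchildren : ∑ v ∈ T.levelFinset n, (T.numChildren v : ℝ) * ‖f v‖ ^ p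
      ≤ T.K 1 n * ∑ v ∈ T.levelFinset n, ‖f v‖ ^ p := by
    rw [Finset.mul_sum]
    refine Finset.sum_le_sum fun v hv => mul_le_mul_of_nonneg_right ?_ (by positivity)
    exact_mod_cast numChildren_le_K (mem_levelFinset.mp hv)
  calc T.Mpp p (T.S f) (n + 1)
      = 1 / T.gamma (n + 1) * ∑ v ∈ T.levelFinset n, (T.numChildren v : ℝ) * ‖f v‖ ^ p := by
        rw [Mpp, sum_rpow_norm_S_succ]
    _ ≤ 1 / T.gamma (n + 1) * (T.K 1 n * ∑ v ∈ T.levelFinset n, ‖f v‖ ^ p) := by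
        gcongr
    _ = T.shiftRatio n * T.Mpp p f n := by
        rw [shiftRatio, Mpp]
        field_simp

theorem Mp_S_succ_le {p c : ℝ} (hp : 0 ≤ p) {n : ℕ} (hc : T.shiftRatio n ≤ c) (f : T.V → ℂ) :
    T.Mp p (T.S f) (n + 1) ≤ c ^ (1 / p) * T.Mp p f n := by
  have hMpp := T.Mpp_nonneg p f n
  rw [Mp, Mp, ← Real.mul_rpow ((shiftRatio_nonneg n).trans hc) hMpp]
  exact Real.rpow_le_rpow (T.Mpp_nonneg p _ _) ((Mpp_S_succ_le p f n).trans (by gcongr))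
    (by positivity)

variable (T) in
def IsOpBound (A : (T.V → ℂ) → (T.V → ℂ)) (Mem : (T.V → ℂ) → Prop) (p C : ℝ) : Prop :=
  0 ≤ C ∧ ∀ f, Mem f → Mem (A f) ∧ T.Hnorm p (A f) ≤ C * T.Hnorm p f

theorem boundedOn_and_opNorm_eq_of_isLeast {A : (T.V → ℂ) → (T.V → ℂ)}
    {Mem : (T.V → ℂ) → Prop} {p C : ℝ} (h : IsLeast {C | T.IsOpBound A Mem p C} C) :
    T.BoundedOn A Mem p ∧ T.opNorm A Mem p = C :=
  ⟨⟨C, h.1⟩, h.csInf_eq⟩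

theorem isOpBound_S {p c : ℝ} (hp : 0 < p) (hc : ∀ n, T.shiftRatio n ≤ c) :
    T.IsOpBound T.S (T.MemHp p) p (c ^ (1 / p)) := by
  have hc0 : 0 ≤ c := (shiftRatio_nonneg 0).trans (hc 0)
  refine ⟨by positivity, fun f hf => ?_⟩
  have hMp : ∀ m, T.Mp p (T.S f) m ≤ c ^ (1 / p) * T.Hnorm p f := by
    rintro (_ | n)
    · rw [Mp_S_zero hp]
      exact mul_nonneg (by positivity) (Hnorm_nonneg p f)
    · exact (Mp_S_succ_le hp.le (hc n) f).trans (by gcongr; exact Mp_le_Hnorm hf n)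
  exact ⟨⟨_, hMp⟩, ciSup_le hMp⟩

theorem Mp_single_le {p : ℝ} (hp : 0 < p) (v : T.V) (m : ℕ) :
    T.Mp p (Pi.single v 1) m ≤ (1 / T.gamma (T.level v) : ℝ) ^ (1 / p) := by
  have hsum : ∑ w ∈ T.levelFinset m, ‖(Pi.single v 1 : T.V → ℂ) w‖ ^ p
      = if m = T.level v then 1 else 0 := by
    simp [Pi.single_apply, apply_ite (fun x : ℂ => ‖x‖ ^ p), Real.zero_rpow hp.ne',
      mem_levelFinset, eq_comm]
  rw [Mp, Mpp, hsum]
  split_ifs with hm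
  · rw [hm, mul_one]
  · rw [mul_zero, Real.zero_rpow (by positivity)]
    positivity

theorem Mpp_S_single_succ {p : ℝ} (hp : 0 < p) (v : T.V) :
    T.Mpp p (T.S (Pi.single v 1)) (T.level v + 1)
      = T.numChildren v / T.gamma (T.level v + 1) := by
  rw [Mpp, sum_rpow_norm_S_succ]
  simp [Pi.single_apply, apply_ite (fun x : ℂ => ‖x‖ ^ p), Real.zero_rpow hp.ne',
    mem_levelFinset, div_eq_inv_mul]

/-- Testing a bound `C` of `S` on the indicator of a vertex with `K(1,n)` children. -/
theorem shiftRatio_le_rpow_of_isOpBound {p C : ℝ} (hp : 0 < p)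
    (hC : T.IsOpBound T.S (T.MemHp p) p C) (n : ℕ) : T.shiftRatio n ≤ C ^ p := by
  obtain ⟨v, rfl, hv⟩ := exists_numChildren_eq_K (T := T) n
  have hγ : (0 : ℝ) < T.gamma (T.level v) := by exact_mod_cast T.gamma_pos _
  obtain ⟨hmem, hnorm⟩ := hC.2 _ ⟨_, Mp_single_le hp v⟩
  have hMp : (T.numChildren v / T.gamma (T.level v + 1) : ℝ) ^ (1 / p)
      ≤ C * (1 / T.gamma (T.level v) : ℝ) ^ (1 / p) := by
    rw [← Mpp_S_single_succ hp]
    calc T.Mp p (T.S (Pi.single v 1)) (T.level v + 1)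
        ≤ T.Hnorm p (T.S (Pi.single v 1)) := Mp_le_Hnorm hmem _
      _ ≤ C * T.Hnorm p (Pi.single v 1) := hnorm
      _ ≤ C * (1 / T.gamma (T.level v) : ℝ) ^ (1 / p) := by
        gcongr
        · exact hC.1
        · exact ciSup_le (Mp_single_le hp v)
  simp only [one_div] at hMp
  rw [Real.rpow_inv_le_iff_of_pos (by positivity) (by have := hC.1; positivity) hp,
    Real.mul_rpow hC.1 (by positivity), Real.rpow_inv_rpow (by positivity) hp.ne'] at hMp
  rw [shiftRatio, ← hv]
  calc (T.numChildren v : ℝ) * T.gamma (T.level v) / T.gamma (T.level v + 1)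
      = T.numChildren v / T.gamma (T.level v + 1) * T.gamma (T.level v) := by ring
    _ ≤ C ^ p * (T.gamma (T.level v) : ℝ)⁻¹ * T.gamma (T.level v) := by gcongr
    _ = C ^ p := by field_simp

theorem isLeast_isOpBound_S {p c : ℝ} (hp : 0 < p) (hc : IsLUB (range T.shiftRatio) c) :
    IsLeast {C | T.IsOpBound T.S (T.MemHp p) p C} (c ^ (1 / p)) := by
  refine ⟨isOpBound_S hp fun n => hc.1 (mem_range_self n), fun C hC => ?_⟩
  have hc0 : 0 ≤ c := (shiftRatio_nonneg 0).trans (hc.1 (mem_range_self 0))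
  have hcC : c ≤ C ^ p :=
    hc.2 (forall_mem_range.mpr (shiftRatio_le_rpow_of_isOpBound hp hC))
  calc c ^ (1 / p) ≤ (C ^ p) ^ (1 / p) := by gcongr
    _ = C := by rw [one_div, Real.rpow_rpow_inv hC.1 hp.ne']

end HTree

theorem forward_shift_norm_example_k_general (T : HTree) (p : ℝ) (hp : 1 ≤ p)
    (k : ℕ)
    (hgamma : ∀ n : ℕ, T.gamma n = n * (k - 1) + 1)
    (hK : ∀ n : ℕ, T.K 1 n = k) :
    T.BoundedOn T.S (T.MemHp p) p ∧
      T.opNorm T.S (T.MemHp p) p = (k : ℝ) ^ (1 / p) := by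
  set d : ℝ := ((k - 1 : ℕ) : ℝ)
  have hratio : ∀ n, T.shiftRatio n = k * ((n * d + 1) / ((n + 1) * d + 1)) := by
    intro n
    simp only [HTree.shiftRatio, hK, hgamma, d]
    push_cast
    ring
  have hd : 0 ≤ d := Nat.cast_nonneg _
  have hlim : Tendsto T.shiftRatio atTop (𝓝 k) := by
    rw [funext hratio]
    simpa using (tendsto_mul_add_one_div_succ_mul_add_one hd).const_mul (k : ℝ)
  have hle : ∀ n, T.shiftRatio n ≤ k := fun n => by
    rw [hratio]
    exact mul_le_of_le_one_right (Nat.cast_nonneg k)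
      (div_le_one_of_le₀ (by nlinarith) (by positivity))
  have hlub : IsLUB (range T.shiftRatio) k :=
    isLUB_of_mem_closure (forall_mem_range.mpr hle)
      (mem_closure_of_tendsto hlim (Eventually.of_forall mem_range_self))
  exact HTree.boundedOn_and_opNorm_eq_of_isLeast
    (HTree.isLeast_isOpBound_S (by linarith) hlub)

/-- on the tree with one distinguished `k`-branching vertex per level
(`γ(n) = nk − (n−1) = n(k−1)+1`, `K(1,n) = k`), the forward shift is bounded with
norm `k^{1/p}`. -/
theorem forward_shift_norm_example_k (T : HTree) (p : ℝ) (hp : 1 ≤ p)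
    (k : ℕ) (hk : 2 ≤ k)
    (hgamma : ∀ n : ℕ, T.gamma n = n * (k - 1) + 1)
    (hK : ∀ n : ℕ, T.K 1 n = k) :
    T.BoundedOn T.S (T.MemHp p) p ∧
      T.opNorm T.S (T.MemHp p) p = (k : ℝ) ^ (1 / p) :=
  forward_shift_norm_example_k_general T p hp k hgamma hK
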